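/- Let h : ℝ → ℝ and define f : S^{3×3} → ℝ by f(ε) = h(det ε). Then f is symmetric polyconvex if and only if h is constant. -/

import Mathlib

open Matrix

/-- The symmetric part `(F + Fᵀ)/2` of a 3×3 matrix. -/
noncomputable def symPart (F : Matrix (Fin 3) (Fin 3) ℝ) : Matrix (Fin 3) (Fin 3) ℝ :=
  (1 / 2 : ℝ) • (F + Fᵀ)

/-- The cofactor matrix: `(cof F)_{ij} = (-1)^{i+j}` times the determinant of the 2×2
matrix obtained from `F` by deleting row `i` and column `j`. -/
noncomputable def cof (F : Matrix (Fin 3) (Fin 3) ℝ) : Matrix (Fin 3) (Fin 3) ℝ :=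
  Matrix.of fun i j =>
    (-1 : ℝ) ^ ((i : ℕ) + (j : ℕ)) * (F.submatrix i.succAbove j.succAbove).det

/-- Frobenius inner product `A:B = Σ_{i,j} A_{ij} B_{ij}` of 3×3 matrices. -/
def mdot (A B : Matrix (Fin 3) (Fin 3) ℝ) : ℝ := ∑ i, ∑ j, A i j * B i j

/-- A function `W : ℝ^{3×3} → ℝ` is polyconvex if there is a convex function
`G : ℝ^{3×3} × ℝ^{3×3} × ℝ → ℝ` with `W F = G (F, cof F, det F)` for all `F`. -/
def Polyconvex3 (W : Matrix (Fin 3) (Fin 3) ℝ → ℝ) : Prop :=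
  ∃ G : Matrix (Fin 3) (Fin 3) ℝ × Matrix (Fin 3) (Fin 3) ℝ × ℝ → ℝ,
    ConvexOn ℝ Set.univ G ∧ ∀ F : Matrix (Fin 3) (Fin 3) ℝ, W F = G (F, cof F, F.det)

/-- `f : S^{3×3} → ℝ` is symmetric polyconvex if `F ↦ f (Fˢ)` is polyconvex. -/
def SymPolyconvex3 (f : Matrix (Fin 3) (Fin 3) ℝ → ℝ) : Prop :=
  Polyconvex3 (fun F => f (symPart F))

/-- `B ∈ S^{3×3}` is negative semi-definite: `Bx·x ≤ 0` for all `x ∈ ℝ³`. -/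
def NegSemidefM (B : Matrix (Fin 3) (Fin 3) ℝ) : Prop :=
  ∀ x : Fin 3 → ℝ, B.mulVec x ⬝ᵥ x ≤ 0

/-- `A ∈ S^{3×3}` is positive semi-definite: `Ax·x ≥ 0` for all `x ∈ ℝ³`. -/
def PosSemidefM (A : Matrix (Fin 3) (Fin 3) ℝ) : Prop :=
  ∀ x : Fin 3 → ℝ, 0 ≤ A.mulVec x ⬝ᵥ x

/-- The symmetrized tensor product `a ⊙ b = (a⊗b + b⊗a)/2`. -/
noncomputable def symProd (a b : Fin 3 → ℝ) : Matrix (Fin 3) (Fin 3) ℝ :=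
  (1 / 2 : ℝ) • (vecMulVec a b + vecMulVec b a)

/-- `f : S^{3×3} → ℝ` is symmetric rank-one convex if `t ↦ f (ε + t a⊙b)` is convex
for every symmetric `ε` and all `a, b ∈ ℝ³`. -/
def SymRankOneConvex3 (f : Matrix (Fin 3) (Fin 3) ℝ → ℝ) : Prop :=
  ∀ ε : Matrix (Fin 3) (Fin 3) ℝ, ε.IsSymm → ∀ a b : Fin 3 → ℝ,
    ConvexOn ℝ Set.univ (fun t : ℝ => f (ε + t • symProd a b))

/-!
Along the line `τ ↦ F τ = !![1,0,τ; 0,u,0; 0,0,v]` the matrix, its cofactor matrix and its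
determinant `u v` are all affine in `τ` (the perturbation `τ e₁ ⊗ e₃` is rank one), so a
polyconvex function is midpoint convex along it. The symmetric part, however, has determinant
`u v - u τ² / 4`, which is not affine. Hence symmetric polyconvexity of `h ∘ det` forces
`h (u v) ≤ h (u v - u / 4)`, and since `(u v, u v - u / 4)` ranges over all pairs of reals,
`h` is monotone in both directions.
-/

noncomputable def minors (F : Matrix (Fin 3) (Fin 3) ℝ) :
    Matrix (Fin 3) (Fin 3) ℝ × Matrix (Fin 3) (Fin 3) ℝ × ℝ :=
  (F, cof F, F.det)

lemma Polyconvex3.le_of_minors_midpoint {W : Matrix (Fin 3) (Fin 3) ℝ → ℝ}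
    (hW : Polyconvex3 W) {F F₁ F₂ : Matrix (Fin 3) (Fin 3) ℝ}
    (hmid : (1 / 2 : ℝ) • minors F₁ + (1 / 2 : ℝ) • minors F₂ = minors F) :
    W F ≤ (W F₁ + W F₂) / 2 := by
  obtain ⟨G, hG, hWG⟩ := hW
  have hconv := hG.2 (Set.mem_univ (minors F₁)) (Set.mem_univ (minors F₂))
    (by norm_num : (0 : ℝ) ≤ 1 / 2) (by norm_num : (0 : ℝ) ≤ 1 / 2) (by norm_num)
  rw [hmid] at hconv
  simp only [minors, ← hWG, smul_eq_mul] at hconv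
  linarith

lemma cof_fin_three (a b c d e f g i j : ℝ) :
    cof !![a, b, c; d, e, f; g, i, j] =
      !![e * j - f * i, -(d * j - f * g), d * i - e * g;
         -(b * j - c * i), a * j - c * g, -(a * i - b * g);
         b * f - c * e, -(a * f - c * d), a * e - b * d] := by
  ext p q
  fin_cases p <;> fin_cases q <;>
    simp [cof, Matrix.det_fin_two, Fin.succAbove, Fin.lt_def, -Fin.val_pos_iff,
      -Fin.val_fin_lt] <;> ring

def shearLine (u v τ : ℝ) : Matrix (Fin 3) (Fin 3) ℝ :=
  !![1, 0, τ; 0, u, 0; 0, 0, v]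

lemma minors_shearLine_midpoint (u v : ℝ) :
    (1 / 2 : ℝ) • minors (shearLine u v 1) + (1 / 2 : ℝ) • minors (shearLine u v (-1)) =
      minors (shearLine u v 0) := by
  simp only [minors, shearLine, cof_fin_three, Matrix.det_fin_three, Prod.smul_mk,
    Prod.mk_add_mk, Prod.mk.injEq]
  refine ⟨?_, ?_, ?_⟩
  · ext p q; fin_cases p <;> fin_cases q <;> simp <;> ring
  · ext p q; fin_cases p <;> fin_cases q <;> simp <;> ring
  · simp; ring

lemma det_symPart_shearLine (u v τ : ℝ) :
    (symPart (shearLine u v τ)).det = u * v - u * τ ^ 2 / 4 := by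
  have hsym : symPart (shearLine u v τ) = !![1, 0, τ / 2; 0, u, 0; τ / 2, 0, v] := by
    ext p q
    fin_cases p <;> fin_cases q <;>
      simp only [symPart, shearLine, Matrix.smul_apply, Matrix.add_apply,
        Matrix.transpose_apply] <;>
      simp <;> ring
  rw [hsym, Matrix.det_fin_three]
  simp
  ring

lemma SymPolyconvex3.comp_det_le {h : ℝ → ℝ} (hf : SymPolyconvex3 (fun ε => h ε.det))
    (u v : ℝ) : h (u * v) ≤ h (u * v - u / 4) := by
  have hmid := hf.le_of_minors_midpoint (minors_shearLine_midpoint u v)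
  simp only [det_symPart_shearLine] at hmid
  norm_num at hmid
  linarith

lemma le_of_forall_mul_le_mul_sub {h : ℝ → ℝ} (hh : ∀ u v : ℝ, h (u * v) ≤ h (u * v - u / 4))
    (p q : ℝ) : h p ≤ h q := by
  rcases eq_or_ne p q with rfl | hpq
  · exact le_rfl
  have hu : 4 * (p - q) ≠ 0 := mul_ne_zero four_ne_zero (sub_ne_zero.mpr hpq)
  have hp : 4 * (p - q) * (p / (4 * (p - q))) = p := by field_simp
  simpa [hp, show p - 4 * (p - q) / 4 = q by ring] using hh (4 * (p - q)) (p / (4 * (p - q)))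

theorem symmetric_polyconvex_det_3d (h : ℝ → ℝ) :
    SymPolyconvex3 (fun ε => h ε.det) ↔ ∀ s t : ℝ, h s = h t := by
  constructor
  · intro hf s t
    have hmono := le_of_forall_mul_le_mul_sub hf.comp_det_le
    exact le_antisymm (hmono s t) (hmono t s)
  · intro hconst
    exact ⟨fun _ => h 0, convexOn_const _ convex_univ, fun F => hconst _ 0⟩
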